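/- arXiv:2306.09740 — 2 statements merged into one kernel-verified Lean document; each statement's English description precedes it below -/
import Mathlib

section
/- Fix μ ∈ X and a Borel probability measure P on X. If the metric spatial depth satisfies D(μ; P) = 0, then the metric lens depth satisfies D_L(μ; P) = 0. -/
open MeasureTheory
open scoped Classical

/-- The kernel `h` of the metric spatial depth. -/
noncomputable def mh {X : Type*} [MetricSpace X] (x₁ x₂ x₃ : X) : ℝ :=
  if x₃ = x₁ ∨ x₃ = x₂ then 0
  else (dist x₁ x₃ ^ 2 + dist x₂ x₃ ^ 2 - dist x₁ x₂ ^ 2) / (dist x₁ x₃ * dist x₂ x₃)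

/-- The metric spatial depth of `μ` with respect to the measure `P`. -/
noncomputable def msDepth {X : Type*} [MetricSpace X] [MeasurableSpace X]
    (μ : X) (P : Measure X) : ℝ :=
  1 - (1 / 2) * ∫ x₁, ∫ x₂, mh x₁ x₂ μ ∂P ∂P

/-- The metric lens depth of `μ` with respect to `P`. -/
noncomputable def lensDepth {X : Type*} [MetricSpace X] [MeasurableSpace X]
    (μ : X) (P : Measure X) : ENNReal :=
  (P.prod P) {p : X × X | dist p.1 p.2 ≥ max (dist p.1 μ) (dist p.2 μ)}

lemma mh_abs_le {X : Type*} [MetricSpace X] (x₁ x₂ x₃ : X) : |mh x₁ x₂ x₃| ≤ 2 := by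
  unfold mh
  split_ifs with hc
  · norm_num
  · push_neg at hc
    have ha : 0 < dist x₁ x₃ := dist_pos.2 (fun h => hc.1 h.symm)
    have hb : 0 < dist x₂ x₃ := dist_pos.2 (fun h => hc.2 h.symm)
    have t1 : dist x₁ x₂ ≤ dist x₁ x₃ + dist x₂ x₃ := by
      rw [dist_comm x₂ x₃]; exact dist_triangle _ _ _
    have t2 : dist x₁ x₃ ≤ dist x₁ x₂ + dist x₂ x₃ := dist_triangle _ _ _
    have t3 : dist x₂ x₃ ≤ dist x₂ x₁ + dist x₁ x₃ := dist_triangle _ _ _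
    rw [dist_comm x₂ x₁] at t3
    have hc0 : 0 ≤ dist x₁ x₂ := dist_nonneg
    rw [abs_le]
    constructor
    · rw [le_div_iff₀ (by positivity)]
      nlinarith
    · rw [div_le_iff₀ (by positivity)]
      nlinarith

lemma mh_le_one {X : Type*} [MetricSpace X] {x₁ x₂ x₃ : X}
    (hd : dist x₁ x₂ ≥ max (dist x₁ x₃) (dist x₂ x₃)) : mh x₁ x₂ x₃ ≤ 1 := by
  unfold mh
  split_ifs with hc
  · norm_num
  · push_neg at hc
    have ha : 0 < dist x₁ x₃ := dist_pos.2 (fun h => hc.1 h.symm)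
    have hb : 0 < dist x₂ x₃ := dist_pos.2 (fun h => hc.2 h.symm)
    have h1 : dist x₁ x₃ ≤ dist x₁ x₂ := le_trans (le_max_left _ _) hd
    have h2 : dist x₂ x₃ ≤ dist x₁ x₂ := le_trans (le_max_right _ _) hd
    rw [div_le_one (by positivity)]
    nlinarith

theorem msDepth_zero_imp_lensDepth_zero {X : Type*} [MetricSpace X] [CompleteSpace X]
    [SecondCountableTopology X] [MeasurableSpace X] [BorelSpace X]
    (μ : X) (P : Measure X) [IsProbabilityMeasure P]
    (h : msDepth μ P = 0) : lensDepth μ P = 0 := by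
  classical
  set f : X × X → ℝ := fun p => mh p.1 p.2 μ with hfdef
  have hmeas : Measurable f := by
    have hs : MeasurableSet {p : X × X | μ = p.1 ∨ μ = p.2} := by
      have : {p : X × X | μ = p.1 ∨ μ = p.2}
          = (Prod.fst ⁻¹' {μ}) ∪ (Prod.snd ⁻¹' {μ}) := by
        ext p; simp [eq_comm]
      rw [this]
      exact ((measurableSet_singleton μ).preimage measurable_fst).union
        ((measurableSet_singleton μ).preimage measurable_snd)
    have : f = fun p : X × X => if μ = p.1 ∨ μ = p.2 then (0 : ℝ)
        else (dist p.1 μ ^ 2 + dist p.2 μ ^ 2 - dist p.1 p.2 ^ 2)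
          / (dist p.1 μ * dist p.2 μ) := by
      funext p; simp only [hfdef, mh]
    rw [this]
    apply Measurable.ite hs measurable_const
    apply Measurable.div
    · apply Measurable.sub
      · apply Measurable.add <;> exact (Measurable.pow_const (by measurability) 2)
      · exact Measurable.pow_const (by measurability) 2
    · exact Measurable.mul (by measurability) (by measurability)
  have hint : Integrable f (P.prod P) := by
    refine Integrable.mono' (integrable_const (2 : ℝ)) hmeas.aestronglyMeasurable ?_
    exact Filter.Eventually.of_forall fun p => by
      simpa [Real.norm_eq_abs] using mh_abs_le p.1 p.2 μ
  have hI : ∫ p, f p ∂(P.prod P) = 2 := by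
    have hp := integral_prod f hint
    unfold msDepth at h
    have : ∫ x₁, ∫ x₂, mh x₁ x₂ μ ∂P ∂P = 2 := by linarith
    rw [hp]
    simpa using this
  have hg0 : ∫ p, (2 - f p) ∂(P.prod P) = 0 := by
    rw [integral_sub (integrable_const 2) hint, hI, integral_const]
    simp
  have hginteg : Integrable (fun p => 2 - f p) (P.prod P) :=
    (integrable_const 2).sub hint
  have hgnn : 0 ≤ fun p => 2 - f p := by
    intro p
    have := (abs_le.1 (mh_abs_le p.1 p.2 μ)).2
    show (0:ℝ) ≤ 2 - mh p.1 p.2 μ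
    linarith
  have hae : (fun p => 2 - f p) =ᵐ[P.prod P] 0 :=
    (integral_eq_zero_iff_of_nonneg hgnn hginteg).1 hg0
  have hnull : (P.prod P) {p : X × X | 2 - f p ≠ 0} = 0 := by
    have h2 := ae_iff.1 hae
    simpa [sub_eq_zero] using h2
  unfold lensDepth
  apply measure_mono_null _ hnull
  intro p hp
  have h1 : mh p.1 p.2 μ ≤ 1 := mh_le_one hp
  simp only [Set.mem_setOf_eq, hfdef]
  intro hc
  linarith
end

section
/- Fix μ ∈ X with P({μ}) = 0, and let (P_n) be a sequence of Borel probability measures on X converging weakly to P as n → ∞. Then the metric spatial depths converge: D(μ; P_n) → D(μ; P) as n → ∞. -/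
open MeasureTheory
open scoped Classical

/-!
The kernel `h(·, ·, μ)` is bounded by `2` (triangle inequality) and continuous on `X × X` off the
closed set `S = {x₁ = μ} ∪ {x₂ = μ}`, which is `P ⊗ P`-null because `P {μ} = 0`. Weak convergence
`Pₙ ⇝ P` gives `Pₙ ⊗ Pₙ ⇝ P ⊗ P`. A bounded function `f` that is continuous off a closed null set
`S` has converging integrals: if `τ` is a thickened indicator of `S`, then `(1 - τ) f` is bounded
and continuous, and the error `|τ f| ≤ C τ` has integral tending to `C · (P ⊗ P) S = 0` as the
thickening shrinks.
-/

open Filter Topology BoundedContinuousFunction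

theorem continuous_mul_of_continuousAt_of_ne_zero {α : Type*} [TopologicalSpace α]
    {c m : α → ℝ} (hc : Continuous c) {C : ℝ} (hm : ∀ x, |m x| ≤ C)
    (hcm : ∀ x, c x ≠ 0 → ContinuousAt m x) : Continuous fun x => c x * m x := by
  refine continuous_iff_continuousAt.2 fun x => ?_
  by_cases hx : c x = 0
  · have hc0 : Tendsto c (𝓝 x) (𝓝 0) := hx ▸ hc.tendsto x
    simpa only [ContinuousAt, hx, zero_mul] using
      hc0.zero_mul_isBoundedUnder_le ⟨C, eventually_map.2 (Eventually.of_forall hm)⟩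
  · exact hc.continuousAt.mul (hcm x hx)

section Approximation

variable {Ω : Type*} [TopologicalSpace Ω] [MeasurableSpace Ω] [OpensMeasurableSpace Ω]

theorem abs_integral_sub_le_of_abs_sub_le (ρ : Measure Ω) [IsFiniteMeasure ρ] {f : Ω → ℝ}
    (hf : Measurable f) (g w : Ω →ᵇ ℝ) (hfg : ∀ y, |f y - g y| ≤ w y) :
    |∫ y, f y ∂ρ - ∫ y, g y ∂ρ| ≤ ∫ y, w y ∂ρ := by
  have hfg' : ∀ᵐ y ∂ρ, ‖f y - g y‖ ≤ w y := Eventually.of_forall hfg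
  have hf_int : Integrable f ρ := by
    refine (((w.integrable ρ).mono' (hf.sub g.continuous.measurable).aestronglyMeasurable
      hfg').add (g.integrable ρ)).congr (Eventually.of_forall fun y => ?_)
    simp
  rw [← integral_sub hf_int (g.integrable ρ)]
  exact norm_integral_le_of_norm_le (w.integrable ρ) hfg'

theorem tendsto_integral_of_approx {ι : Type*} {L : Filter ι} {ν : Measure Ω} [IsFiniteMeasure ν]
    {νs : ι → Measure Ω} [∀ i, IsFiniteMeasure (νs i)]
    (hconv : ∀ g : Ω →ᵇ ℝ, Tendsto (fun i => ∫ y, g y ∂νs i) L (𝓝 (∫ y, g y ∂ν)))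
    {f : Ω → ℝ} (hf : Measurable f) (g w : ℕ → Ω →ᵇ ℝ) (hfg : ∀ k y, |f y - g k y| ≤ w k y)
    (hw : Tendsto (fun k => ∫ y, w k y ∂ν) atTop (𝓝 0)) :
    Tendsto (fun i => ∫ y, f y ∂νs i) L (𝓝 (∫ y, f y ∂ν)) := by
  refine Metric.tendsto_nhds.2 fun δ hδ => ?_
  obtain ⟨k, hk⟩ := (hw.eventually_lt_const (by positivity : (0 : ℝ) < δ / 3)).exists
  filter_upwards [(hconv (w k)).eventually_lt_const hk,
    Metric.tendsto_nhds.1 (hconv (g k)) (δ / 3) (by positivity)] with i hwi hgi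
  calc dist (∫ y, f y ∂νs i) (∫ y, f y ∂ν)
      ≤ dist (∫ y, f y ∂νs i) (∫ y, g k y ∂νs i) + dist (∫ y, g k y ∂νs i) (∫ y, g k y ∂ν)
        + dist (∫ y, g k y ∂ν) (∫ y, f y ∂ν) := dist_triangle4 _ _ _ _
    _ ≤ ∫ y, w k y ∂νs i + dist (∫ y, g k y ∂νs i) (∫ y, g k y ∂ν) + ∫ y, w k y ∂ν := by
        rw [Real.dist_eq, Real.dist_eq (∫ y, g k y ∂ν), abs_sub_comm (∫ y, g k y ∂ν)]
        gcongr <;> exact abs_integral_sub_le_of_abs_sub_le _ hf _ _ (hfg k)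
    _ < δ := by linarith

end Approximation

theorem tendsto_integral_of_continuousAt_of_measure_null {Y : Type*} [PseudoEMetricSpace Y]
    [MeasurableSpace Y] [OpensMeasurableSpace Y] {ι : Type*} {L : Filter ι}
    {ν : Measure Y} [IsFiniteMeasure ν] {νs : ι → Measure Y} [∀ i, IsFiniteMeasure (νs i)]
    (hconv : ∀ g : Y →ᵇ ℝ, Tendsto (fun i => ∫ y, g y ∂νs i) L (𝓝 (∫ y, g y ∂ν)))
    {S : Set Y} (hS : IsClosed S) (hνS : ν S = 0) {f : Y → ℝ} (hf : Measurable f) {C : ℝ}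
    (hfC : ∀ y, |f y| ≤ C) (hfS : ∀ y ∉ S, ContinuousAt f y) :
    Tendsto (fun i => ∫ y, f y ∂νs i) L (𝓝 (∫ y, f y ∂ν)) := by
  have hδ (k : ℕ) : (0 : ℝ) < 1 / (k + 1) := Nat.one_div_pos_of_nat
  let τ (k : ℕ) : Y →ᵇ ℝ := (thickenedIndicator (hδ k) S).comp _ NNReal.isometry_coe.lipschitz
  have hτ (k : ℕ) (y : Y) : τ k y = thickenedIndicator (hδ k) S y := rfl
  have hτ0 (k : ℕ) (y : Y) : 0 ≤ τ k y := NNReal.coe_nonneg _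
  have hτ1 (k : ℕ) (y : Y) : τ k y ≤ 1 := by
    simpa [hτ] using thickenedIndicator_le_one (hδ k) S y
  have hg (k : ℕ) : Continuous fun y => (1 - τ k y) * f y := by
    refine continuous_mul_of_continuousAt_of_ne_zero (by fun_prop) hfC fun y hy => hfS y ?_
    intro hyS
    rw [hτ, thickenedIndicator_one (hδ k) S hyS] at hy
    simp at hy
  let g (k : ℕ) : Y →ᵇ ℝ := ofNormedAddCommGroup _ (hg k) C fun y => by
    rw [Real.norm_eq_abs, abs_mul, abs_of_nonneg (by linarith [hτ1 k y])]
    nlinarith [hτ0 k y, hfC y, abs_nonneg (f y)]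
  refine tendsto_integral_of_approx hconv hf g (fun k => C • τ k) (fun k y => ?_) ?_
  · simp only [g, coe_ofNormedAddCommGroup, coe_smul, smul_eq_mul]
    rw [show f y - (1 - τ k y) * f y = τ k y * f y by ring, abs_mul, abs_of_nonneg (hτ0 k y),
      mul_comm]
    exact mul_le_mul_of_nonneg_right (hfC y) (hτ0 k y)
  · have h := tendsto_integral_thickenedIndicator_of_isClosed ν hS hδ
      tendsto_one_div_add_atTop_nhds_zero_nat
    simp only [coe_smul, smul_eq_mul, integral_const_mul, hτ]
    simpa [Measure.real, hνS] using h.const_mul C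

theorem tendsto_integral_prod_of_tendsto_integral {α β ι : Type*} {L : Filter ι}
    [TopologicalSpace α] [SecondCountableTopology α] [TopologicalSpace.PseudoMetrizableSpace α]
    [MeasurableSpace α] [OpensMeasurableSpace α]
    [TopologicalSpace β] [SecondCountableTopology β] [TopologicalSpace.PseudoMetrizableSpace β]
    [MeasurableSpace β] [OpensMeasurableSpace β]
    {P : Measure α} [IsProbabilityMeasure P] {Ps : ι → Measure α} [∀ i, IsProbabilityMeasure (Ps i)]
    {Q : Measure β} [IsProbabilityMeasure Q] {Qs : ι → Measure β} [∀ i, IsProbabilityMeasure (Qs i)]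
    (hP : ∀ f : α →ᵇ ℝ, Tendsto (fun i => ∫ x, f x ∂Ps i) L (𝓝 (∫ x, f x ∂P)))
    (hQ : ∀ f : β →ᵇ ℝ, Tendsto (fun i => ∫ x, f x ∂Qs i) L (𝓝 (∫ x, f x ∂Q)))
    (g : α × β →ᵇ ℝ) :
    Tendsto (fun i => ∫ p, g p ∂(Ps i).prod (Qs i)) L (𝓝 (∫ p, g p ∂P.prod Q)) := by
  have hP' : Tendsto (β := ProbabilityMeasure α) (fun i => ⟨Ps i, inferInstance⟩) L
      (𝓝 ⟨P, inferInstance⟩) :=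
    ProbabilityMeasure.tendsto_iff_forall_integral_tendsto.2 hP
  have hQ' : Tendsto (β := ProbabilityMeasure β) (fun i => ⟨Qs i, inferInstance⟩) L
      (𝓝 ⟨Q, inferInstance⟩) :=
    ProbabilityMeasure.tendsto_iff_forall_integral_tendsto.2 hQ
  exact ProbabilityMeasure.tendsto_iff_forall_integral_tendsto.1
    ((ProbabilityMeasure.continuous_prod.tendsto _).comp (hP'.prodMk_nhds hQ')) g

section MetricSpatialDepth

variable {X : Type*} [MetricSpace X]

theorem abs_mh_le_two (x₁ x₂ x₃ : X) : |mh x₁ x₂ x₃| ≤ 2 := by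
  unfold mh
  split_ifs with h
  · simp
  simp only [not_or] at h
  have h₁ : 0 < dist x₁ x₃ := dist_pos.2 (Ne.symm h.1)
  have h₂ : 0 < dist x₂ x₃ := dist_pos.2 (Ne.symm h.2)
  have t₁ := dist_triangle x₁ x₃ x₂
  have t₂ := dist_triangle x₁ x₂ x₃
  have t₃ := dist_triangle x₂ x₁ x₃
  rw [dist_comm x₃ x₂] at t₁
  rw [dist_comm x₂ x₁] at t₃
  -- `|a² + b² - c²| ≤ 2ab` says `(a - b)² ≤ c² ≤ (a + b)²`, i.e. the triangle inequalities
  have := dist_nonneg (x := x₁) (y := x₂)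
  rw [abs_le, le_div_iff₀ (by positivity), div_le_iff₀ (by positivity)]
  constructor <;> nlinarith

theorem continuousAt_mh {μ : X} {p : X × X} (h₁ : p.1 ≠ μ) (h₂ : p.2 ≠ μ) :
    ContinuousAt (fun q : X × X => mh q.1 q.2 μ) p := by
  have hU : {q : X × X | q.1 ≠ μ ∧ q.2 ≠ μ} ∈ 𝓝 p :=
    ((isOpen_ne_fun continuous_fst continuous_const).inter
      (isOpen_ne_fun continuous_snd continuous_const)).mem_nhds ⟨h₁, h₂⟩
  have heq : (fun q : X × X => (dist q.1 μ ^ 2 + dist q.2 μ ^ 2 - dist q.1 q.2 ^ 2) /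
      (dist q.1 μ * dist q.2 μ)) =ᶠ[𝓝 p] fun q => mh q.1 q.2 μ := by
    filter_upwards [hU] with q hq
    rw [mh, if_neg (by rintro (h | h) <;> simp_all)]
  refine ContinuousAt.congr ?_ heq
  have := dist_pos.2 h₁
  have := dist_pos.2 h₂
  exact ContinuousAt.div (by fun_prop) (by fun_prop) (by positivity)

variable [MeasurableSpace X] [BorelSpace X] [SecondCountableTopology X]

theorem measurable_mh (μ : X) : Measurable fun p : X × X => mh p.1 p.2 μ := by
  unfold mh
  refine Measurable.ite ?_ measurable_const (by fun_prop)
  exact (measurableSet_eq_fun measurable_const measurable_fst).union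
    (measurableSet_eq_fun measurable_const measurable_snd)

theorem integral_integral_mh (μ : X) (Q : Measure X) [IsProbabilityMeasure Q] :
    ∫ x₁, ∫ x₂, mh x₁ x₂ μ ∂Q ∂Q = ∫ p, mh p.1 p.2 μ ∂Q.prod Q :=
  integral_integral <| Integrable.of_bound (measurable_mh μ).aestronglyMeasurable 2
    (Eventually.of_forall fun p => abs_mh_le_two p.1 p.2 μ)

end MetricSpatialDepth

theorem msDepth_continuous_in_P_general {X : Type*} [MetricSpace X]
    [SecondCountableTopology X] [MeasurableSpace X] [BorelSpace X]
    (μ : X) (P : Measure X) [IsProbabilityMeasure P] (hμ : P {μ} = 0)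
    (Pn : ℕ → Measure X) [∀ n, IsProbabilityMeasure (Pn n)]
    (hweak : ∀ f : BoundedContinuousFunction X ℝ,
      Filter.Tendsto (fun n => ∫ x, f x ∂(Pn n)) Filter.atTop (nhds (∫ x, f x ∂P))) :
    Filter.Tendsto (fun n => msDepth μ (Pn n)) Filter.atTop (nhds (msDepth μ P)) := by
  let S : Set (X × X) := Prod.fst ⁻¹' {μ} ∪ Prod.snd ⁻¹' {μ}
  have hS : IsClosed S :=
    (isClosed_singleton.preimage continuous_fst).union (isClosed_singleton.preimage continuous_snd)
  have hPS : P.prod P S = 0 :=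
    measure_union_null (by simp [← Set.prod_univ, hμ]) (by simp [← Set.univ_prod, hμ])
  have hlim := tendsto_integral_of_continuousAt_of_measure_null
    (tendsto_integral_prod_of_tendsto_integral hweak hweak) hS hPS (measurable_mh μ)
    (fun p => abs_mh_le_two p.1 p.2 μ) fun p hp => by
      simp only [S, Set.mem_union, Set.mem_preimage, Set.mem_singleton_iff, not_or] at hp
      exact continuousAt_mh hp.1 hp.2
  simp only [msDepth, integral_integral_mh]
  exact tendsto_const_nhds.sub (hlim.const_mul _)

theorem msDepth_continuous_in_P {X : Type*} [MetricSpace X] [CompleteSpace X]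
    [SecondCountableTopology X] [MeasurableSpace X] [BorelSpace X]
    (μ : X) (P : Measure X) [IsProbabilityMeasure P] (hμ : P {μ} = 0)
    (Pn : ℕ → Measure X) [∀ n, IsProbabilityMeasure (Pn n)]
    (hweak : ∀ f : BoundedContinuousFunction X ℝ,
      Filter.Tendsto (fun n => ∫ x, f x ∂(Pn n)) Filter.atTop (nhds (∫ x, f x ∂P))) :
    Filter.Tendsto (fun n => msDepth μ (Pn n)) Filter.atTop (nhds (msDepth μ P)) :=
  msDepth_continuous_in_P_general μ P hμ Pn hweak
end
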